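/- For all integers x ≥ 1 and m ≥ x+1, if c′ ∈ C(m+1,x) starts, from the left, with x+2 ones (Group 5), and c″ denotes the binary word formed by the m−x rightmost bits of c′, then c″ ∈ C(m−x,x) and g(m+1,x,c′) = g(m−x,x,c″) + N(m,x); that is, the shift in codeword indices for Group 5 is ζ₅ = N(m,x). -/

import Mathlib

/-!
Call a word `d` of length `m + 1` *padded* if it reads `1 b^x e`, where `e` is its low part of
length `m - x` and `b` is the top bit of `e`. Restricting to the low `m - x` bits is a bijection
from the padded codewords onto `C(m - x, x)`, and since `c'` starts with `1^(x+2)` it turns the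
comparison with `c'` into the comparison with `c''`. An unpadded word has a `0` among its top
`x + 2` bits, so it precedes `c'`; and dropping the top bit is a bijection from the unpadded
codewords onto `C(m, x)`, because the top bit of an unpadded codeword is forced by the others.

Codewords are handled through their flips, the positions `p` with `d (p + 1) ≠ d p`: a word lies
in `C(n, x)` iff any two of its flips are more than `x` apart.
-/

/-- `noForbidden m x c` says the binary word `c = (c_{m-1}, …, c_0)` contains no contiguous
subword of the form `0 1^y 0` or `1 0^y 1` for any `1 ≤ y ≤ x`. -/
def noForbidden (m x : ℕ) (c : Fin m → Bool) : Prop :=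
  ∀ j y : ℕ, 1 ≤ y → y ≤ x → (h : j + y + 1 < m) →
    ¬ ((∀ k, 1 ≤ k → (hk : k ≤ y) → c ⟨j + k, by omega⟩ = ! c ⟨j, by omega⟩) ∧
        c ⟨j + y + 1, h⟩ = c ⟨j, by omega⟩)

/-- `N(m, x)`: the cardinality of the LOCO code `C(m, x)`. -/
noncomputable def locoN (m x : ℕ) : ℕ := Nat.card {c : Fin m → Bool // noForbidden m x c}

/-- `N(k, x)` extended to integer `k` by the convention `N(k, x) = 2` for `k ≤ 1`. -/
noncomputable def Nex (k : ℤ) (x : ℕ) : ℤ := if k ≤ 1 then 2 else (locoN k.toNat x : ℤ)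

/-- Strict lexicographic order on binary words, comparing bits from `c_{m-1}`
(most significant) down to `c_0`, with `0 < 1`. -/
def lexLt (m : ℕ) (d c : Fin m → Bool) : Prop :=
  ∃ i : Fin m, d i = false ∧ c i = true ∧ ∀ j : Fin m, (i : ℕ) < (j : ℕ) → d j = c j

/-- The index `g(m, x, c)` of a codeword: the number of codewords of `C(m, x)` that
precede `c` in lexicographic order. -/
noncomputable def locoIdx (m x : ℕ) (c : Fin m → Bool) : ℕ :=
  Nat.card {d : Fin m → Bool // noForbidden m x d ∧ lexLt m d c}

theorem Nat.card_subtype_eq_card_and_add_card_and_not {α : Type*} [Finite α] (p q : α → Prop) :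
    Nat.card {a // p a} = Nat.card {a // p a ∧ q a} + Nat.card {a // p a ∧ ¬ q a} := by
  classical
  rw [← Nat.card_sum]
  exact Nat.card_congr ((Equiv.sumCompl fun a : {a // p a} => q a).symm.trans
    (Equiv.sumCongr (Equiv.subtypeSubtypeEquivSubtypeInter p q)
      (Equiv.subtypeSubtypeEquivSubtypeInter p (¬ q ·))))

namespace Loco

section Words

variable {n : ℕ}

def bitAt (d : Fin n → Bool) (i : ℕ) : Bool :=
  if h : i < n then d ⟨i, h⟩ else false

theorem bitAt_of_lt {i : ℕ} (d : Fin n → Bool) (h : i < n) : bitAt d i = d ⟨i, h⟩ :=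
  dif_pos h

@[simp]
theorem bitAt_val (d : Fin n → Bool) (i : Fin n) : bitAt d i = d i :=
  bitAt_of_lt d i.isLt

theorem bitAt_comp_castLE {k i : ℕ} (h : k ≤ n) (d : Fin n → Bool) (hi : i < k) :
    bitAt (d ∘ Fin.castLE h) i = bitAt d i := by
  rw [bitAt_of_lt _ hi, bitAt_of_lt _ (hi.trans_le h)]
  rfl

def IsFlip (d : Fin n → Bool) (p : ℕ) : Prop :=
  p + 1 < n ∧ bitAt d (p + 1) ≠ bitAt d p

theorem bitAt_eq_of_forall_not_isFlip {a b : ℕ} {d : Fin n → Bool} (hab : a ≤ b) (hb : b < n)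
    (h : ∀ r, a ≤ r → r < b → ¬ IsFlip d r) : bitAt d b = bitAt d a := by
  induction b, hab using Nat.le_induction with
  | base => rfl
  | succ b hab ih =>
    rw [← ih (by omega) fun r h₁ h₂ => h r h₁ (by omega)]
    by_contra hne
    exact h b hab (by omega) ⟨hb, hne⟩

theorem isFlip_comp_castLE_iff {k p : ℕ} (h : k ≤ n) (d : Fin n → Bool) :
    IsFlip (d ∘ Fin.castLE h) p ↔ p + 1 < k ∧ IsFlip d p := by
  constructor
  · rintro ⟨hpk, hne⟩
    rw [bitAt_comp_castLE h d hpk, bitAt_comp_castLE h d (by omega)] at hne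
    exact ⟨hpk, by omega, hne⟩
  · rintro ⟨hpk, -, hne⟩
    refine ⟨hpk, ?_⟩
    rwa [bitAt_comp_castLE h d hpk, bitAt_comp_castLE h d (by omega)]

theorem not_noForbidden_of_isFlip {x p y : ℕ} {d : Fin n → Bool} (hp : IsFlip d p)
    (hq : IsFlip d (p + y)) (hy : 0 < y) (hyx : y ≤ x)
    (hmid : ∀ r, 0 < r → r < y → ¬ IsFlip d (p + r)) : ¬ noForbidden n x d := by
  obtain ⟨hqn, hq⟩ := hq
  have hrun : ∀ k, 1 ≤ k → k ≤ y → bitAt d (p + k) = !bitAt d p := by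
    intro k hk hky
    have hnf : ∀ r, p + 1 ≤ r → r < p + k → ¬ IsFlip d r := fun r h₁ h₂ => by
      simpa [Nat.add_sub_cancel' (by omega : p ≤ r)] using hmid (r - p) (by omega) (by omega)
    rw [bitAt_eq_of_forall_not_isFlip (by omega) (by omega) hnf]
    exact Bool.eq_not_iff.2 hp.2
  intro hd
  refine hd p y hy hyx hqn ⟨fun k hk hky => ?_, ?_⟩
  · rw [← bitAt_of_lt d, ← bitAt_of_lt d]
    exact hrun k hk hky
  · rw [← bitAt_of_lt d, ← bitAt_of_lt d]
    rw [hrun y hy le_rfl] at hq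
    simpa using hq

theorem lt_of_isFlip_of_isFlip_add {x p y : ℕ} {d : Fin n → Bool} (hd : noForbidden n x d)
    (hp : IsFlip d p) (hq : IsFlip d (p + y)) (hy : 0 < y) : x < y := by
  induction y using Nat.strong_induction_on with
  | _ y ih =>
  by_cases hmid : ∃ r, 0 < r ∧ r < y ∧ IsFlip d (p + r)
  · obtain ⟨r, hr, hry, hpr⟩ := hmid
    exact (ih r hry hpr hr).trans hry
  push Not at hmid
  by_contra hyx
  exact not_noForbidden_of_isFlip hp hq hy (by omega) hmid hd

theorem noForbidden_iff_isFlip {x : ℕ} {d : Fin n → Bool} :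
    noForbidden n x d ↔ ∀ p q, IsFlip d p → IsFlip d q → p < q → x < q - p := by
  refine ⟨fun hd p q hp hq hpq => ?_, ?_⟩
  · obtain ⟨y, rfl⟩ := Nat.exists_eq_add_of_lt hpq
    have := lt_of_isFlip_of_isFlip_add hd hp (y := y + 1) (by rwa [← add_assoc]) (by omega)
    omega
  · rintro h j y hy hyx hjy ⟨hmid, htop⟩
    have hj := hmid 1 le_rfl hy
    have hjy' := hmid y hy le_rfl
    rw [← bitAt_of_lt d, ← bitAt_of_lt d] at hj hjy' htop
    have := h j (j + y) ⟨by omega, by simp [hj]⟩ ⟨hjy, by simp [hjy', htop]⟩ (by omega)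
    omega

theorem noForbidden_comp_castLE {k x : ℕ} (h : k ≤ n) {d : Fin n → Bool}
    (hd : noForbidden n x d) : noForbidden k x (d ∘ Fin.castLE h) := by
  rw [noForbidden_iff_isFlip] at hd ⊢
  exact fun p q hp hq =>
    hd p q ((isFlip_comp_castLE_iff h d).1 hp).2 ((isFlip_comp_castLE_iff h d).1 hq).2

theorem noForbidden_succ_iff {m x : ℕ} {d : Fin (m + 1) → Bool} :
    noForbidden (m + 1) x d ↔ noForbidden m x (d ∘ Fin.castLE m.le_succ) ∧
      (bitAt d m ≠ bitAt d (m - 1) → ∀ p, p + 1 < m → IsFlip d p → x < m - 1 - p) := by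
  simp only [noForbidden_iff_isFlip, isFlip_comp_castLE_iff]
  constructor
  · intro hd
    refine ⟨fun p q hp hq => hd p q hp.2 hq.2, fun hne p hpm hp => ?_⟩
    exact hd p (m - 1) hp ⟨by omega, by rwa [Nat.sub_add_cancel (by omega)]⟩ (by omega)
  · rintro ⟨hlow, htop⟩ p q hp hq hpq
    by_cases hqm : q + 1 < m
    · exact hlow p q ⟨by omega, hp⟩ ⟨hqm, hq⟩ hpq
    · obtain rfl : q = m - 1 := by have := hq.1; omega
      exact htop (by simpa [Nat.sub_add_cancel (show 1 ≤ m by omega)] using hq.2) p (by omega) hp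

theorem lexLt_of_exists_false {k : ℕ} {d c : Fin n → Bool}
    (hc : ∀ i : Fin n, k ≤ i → c i = true) (hd : ∃ i : Fin n, k ≤ i ∧ d i = false) :
    lexLt n d c := by
  classical
  obtain ⟨i, hi, hmax⟩ := Finset.exists_max_image
    (Finset.univ.filter fun i : Fin n => k ≤ i ∧ d i = false) id
    (by obtain ⟨i, hi⟩ := hd; exact ⟨i, by simpa using hi⟩)
  simp only [Finset.mem_filter, Finset.mem_univ, true_and, id] at hi hmax
  refine ⟨i, hi.2, hc i hi.1, fun j hij => ?_⟩
  rw [hc j (by omega)]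
  by_contra h
  exact absurd (hmax j ⟨by omega, by simpa using h⟩) (not_le.2 hij)

theorem lexLt_iff_comp_castLE {k : ℕ} (h : k ≤ n) {d c : Fin n → Bool}
    (hdc : ∀ i : Fin n, k ≤ i → d i = c i) :
    lexLt n d c ↔ lexLt k (d ∘ Fin.castLE h) (c ∘ Fin.castLE h) := by
  constructor
  · rintro ⟨i, hdi, hci, habove⟩
    have hik : (i : ℕ) < k := by
      by_contra hik
      simp [hdc i (by omega), hci] at hdi
    exact ⟨⟨i, hik⟩, hdi, hci, fun j hij => habove _ hij⟩
  · rintro ⟨i, hdi, hci, habove⟩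
    refine ⟨Fin.castLE h i, hdi, hci, fun j hij => ?_⟩
    by_cases hjk : (j : ℕ) < k
    · exact habove ⟨j, hjk⟩ hij
    · exact hdc j (by omega)

end Words

section Padding

variable {m x : ℕ}

def extendWith {k : ℕ} (n : ℕ) (t : ℕ → Bool) (e : Fin k → Bool) : Fin n → Bool :=
  fun i => if (i : ℕ) < k then bitAt e i else t i

theorem bitAt_extendWith {k n i : ℕ} (t : ℕ → Bool) (e : Fin k → Bool) (hi : i < n) :
    bitAt (extendWith n t e) i = if i < k then bitAt e i else t i := by
  rw [bitAt_of_lt _ hi]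
  rfl

@[simp]
theorem extendWith_comp_castLE {k n : ℕ} (h : k ≤ n) (t : ℕ → Bool) (e : Fin k → Bool) :
    extendWith n t e ∘ Fin.castLE h = e := by
  funext i
  simp [extendWith, bitAt_of_lt]

/-- The word `1 b^x e`, where `b` is the top bit of `e`. -/
def pad (m x : ℕ) (e : Fin (m - x) → Bool) : Fin (m + 1) → Bool :=
  extendWith (m + 1) (fun i => decide (i = m) || bitAt e (m - x - 1)) e

theorem isFlip_pad {p : ℕ} {e : Fin (m - x) → Bool} (hp : IsFlip (pad m x e) p) :
    IsFlip e p ∨ p + 1 = m := by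
  obtain ⟨hpm, hne⟩ := hp
  rw [pad, bitAt_extendWith _ _ hpm, bitAt_extendWith _ _ (by omega)] at hne
  by_cases hpk : p + 1 < m - x
  · simp only [hpk, if_true, show p < m - x by omega] at hne
    exact Or.inl ⟨hpk, hne⟩
  · right
    by_contra hpm'
    obtain hpx | hpx := Nat.lt_or_ge p (m - x)
    · obtain rfl : p = m - x - 1 := by omega
      simp [hpx, hpk, hpm'] at hne
    · simp [hpk, hpx, hpm', show p ≠ m by omega] at hne

theorem noForbidden_pad {e : Fin (m - x) → Bool}
    (he : noForbidden (m - x) x e) : noForbidden (m + 1) x (pad m x e) := by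
  rw [noForbidden_iff_isFlip] at he ⊢
  intro p q hp hq hpq
  have hq₁ := hq.1
  rcases isFlip_pad hp with hp' | hp' <;> rcases isFlip_pad hq with hq' | hq'
  · exact he p q hp' hq' hpq
  · have := hp'.1
    omega
  all_goals omega

@[simp]
theorem pad_comp_castLE (h : m - x ≤ m + 1) (e : Fin (m - x) → Bool) :
    pad m x e ∘ Fin.castLE h = e :=
  extendWith_comp_castLE h _ e

def IsPadded (m x : ℕ) (d : Fin (m + 1) → Bool) : Prop :=
  d = pad m x (d ∘ Fin.castLE (by omega))

theorem isPadded_pad (e : Fin (m - x) → Bool) : IsPadded m x (pad m x e) := by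
  rw [IsPadded, pad_comp_castLE]

theorem isFlip_of_isPadded {p : ℕ} {d : Fin (m + 1) → Bool}
    (hd : IsPadded m x d) (hp : IsFlip d p) : p + 1 < m - x ∨ p + 1 = m := by
  rw [hd] at hp
  exact (isFlip_pad hp).imp_left And.left

theorem isPadded_of_forall_not_isFlip {d : Fin (m + 1) → Bool} (hm : x + 1 ≤ m)
    (htop : bitAt d m = true) (h : ∀ p, m - x - 1 ≤ p → p + 1 < m → ¬ IsFlip d p) :
    IsPadded m x d := by
  funext i
  rw [← bitAt_val d, ← bitAt_val (pad m x _), pad, bitAt_extendWith _ _ i.isLt]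
  split_ifs with hi
  · rw [bitAt_comp_castLE _ _ hi]
  · rw [bitAt_comp_castLE _ _ (by omega)]
    by_cases him : (i : ℕ) = m
    · simp [him, htop]
    · rw [bitAt_eq_of_forall_not_isFlip (a := m - x - 1) (by omega) (by omega)
        fun r h₁ h₂ => h r h₁ (by omega)]
      simp [him]

theorem exists_isFlip_of_not_isPadded (hm : x + 1 ≤ m) {d : Fin (m + 1) → Bool}
    (hd : noForbidden (m + 1) x d) (hnp : ¬ IsPadded m x d) (htop : bitAt d m = true) :
    bitAt d (m - 1) = true ∧ ∃ p, m - x - 1 ≤ p ∧ p + 1 < m ∧ IsFlip d p := by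
  obtain ⟨p, hp₁, hp₂, hp⟩ : ∃ p, m - x - 1 ≤ p ∧ p + 1 < m ∧ IsFlip d p := by
    by_contra h
    push Not at h
    exact hnp (isPadded_of_forall_not_isFlip hm htop h)
  refine ⟨?_, p, hp₁, hp₂, hp⟩
  by_contra hm1
  have := (noForbidden_succ_iff.1 hd).2 (by simp_all) p hp₂ hp
  omega

theorem eq_of_comp_castLE_eq {d₁ d₂ : Fin (m + 1) → Bool}
    (hlow : d₁ ∘ Fin.castLE m.le_succ = d₂ ∘ Fin.castLE m.le_succ)
    (htop : bitAt d₁ m = bitAt d₂ m) : d₁ = d₂ := by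
  funext i
  rw [← bitAt_val d₁ i, ← bitAt_val d₂ i]
  obtain hi | hi := Nat.lt_or_ge i m
  · rw [← bitAt_comp_castLE m.le_succ d₁ hi, hlow, bitAt_comp_castLE _ _ hi]
  · rwa [show (i : ℕ) = m by omega]

theorem bitAt_top_eq_true_of_not_isPadded (hm : x + 1 ≤ m) {d₁ d₂ : Fin (m + 1) → Bool}
    (hd₁ : noForbidden (m + 1) x d₁) (hd₂ : noForbidden (m + 1) x d₂)
    (hnp₂ : ¬ IsPadded m x d₂) (htop : bitAt d₂ m = true)
    (hlow : d₁ ∘ Fin.castLE m.le_succ = d₂ ∘ Fin.castLE m.le_succ) :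
    bitAt d₁ m = true := by
  obtain ⟨h₂, p, hpx, hpm, hp₂⟩ := exists_isFlip_of_not_isPadded hm hd₂ hnp₂ htop
  have hp₁ : IsFlip d₁ p := by
    have := (isFlip_comp_castLE_iff m.le_succ d₂).2 ⟨hpm, hp₂⟩
    rw [← hlow, isFlip_comp_castLE_iff] at this
    exact this.2
  have h₁ : bitAt d₁ (m - 1) = true := by
    rw [← bitAt_comp_castLE m.le_succ d₁ (by omega), hlow, bitAt_comp_castLE _ _ (by omega),
      h₂]
  by_contra htop₁
  have := (noForbidden_succ_iff.1 hd₁).2 (by simp_all) p hpm hp₁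
  omega

theorem exists_unpadded_extension (hm : x + 1 ≤ m) {f : Fin m → Bool}
    (hf : noForbidden m x f) : ∃ d : Fin (m + 1) → Bool,
      noForbidden (m + 1) x d ∧ ¬ IsPadded m x d ∧ d ∘ Fin.castLE m.le_succ = f := by
  have hm1 : m - 1 < m := by omega
  by_cases h₀ : noForbidden (m + 1) x (extendWith (m + 1) (fun _ => false) f)
  · refine ⟨_, h₀, fun hpad => ?_, extendWith_comp_castLE _ _ _⟩
    have := congrArg (bitAt · m) hpad
    simp [pad, bitAt_extendWith, show ¬ m < m - x by omega] at this
  set d₀ := extendWith (m + 1) (fun _ => false) f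
  set d₁ := extendWith (m + 1) (fun _ => true) f
  have hlow₀ : d₀ ∘ Fin.castLE m.le_succ = f := extendWith_comp_castLE _ _ _
  have hlow₁ : d₁ ∘ Fin.castLE m.le_succ = f := extendWith_comp_castLE _ _ _
  rw [noForbidden_succ_iff, hlow₀] at h₀
  push Not at h₀
  obtain ⟨hne, p, hpm, hp, hpx⟩ := h₀ hf
  have hf1 : bitAt f (m - 1) = true := by
    simpa [d₀, bitAt_extendWith, hm1] using hne
  have hp₁ : IsFlip d₁ p := by
    have := (isFlip_comp_castLE_iff m.le_succ d₀).2 ⟨hpm, hp⟩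
    rw [hlow₀, ← hlow₁, isFlip_comp_castLE_iff] at this
    exact this.2
  refine ⟨d₁, ?_, fun hpad => ?_, hlow₁⟩
  · rw [noForbidden_succ_iff, hlow₁]
    refine ⟨hf, fun hne₁ => absurd ?_ hne₁⟩
    simp [d₁, bitAt_extendWith, hm1, hf1]
  · have := isFlip_of_isPadded hpad hp₁
    omega

theorem card_noForbidden_not_isPadded (hm : x + 1 ≤ m) :
    Nat.card {d : Fin (m + 1) → Bool // noForbidden (m + 1) x d ∧ ¬ IsPadded m x d} =
      locoN m x := by
  refine Nat.card_eq_of_bijective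
    (fun d => ⟨d.1 ∘ Fin.castLE m.le_succ, noForbidden_comp_castLE _ d.2.1⟩) ⟨?_, ?_⟩
  · rintro ⟨d₁, hd₁, hnp₁⟩ ⟨d₂, hd₂, hnp₂⟩ hlow
    replace hlow : d₁ ∘ Fin.castLE m.le_succ = d₂ ∘ Fin.castLE m.le_succ :=
      congrArg Subtype.val hlow
    refine Subtype.ext <| eq_of_comp_castLE_eq hlow <|
      Bool.eq_iff_iff.2 ⟨fun h => ?_, fun h => ?_⟩
    exacts [bitAt_top_eq_true_of_not_isPadded hm hd₂ hd₁ hnp₁ h hlow.symm,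
      bitAt_top_eq_true_of_not_isPadded hm hd₁ hd₂ hnp₂ h hlow]
  · rintro ⟨f, hf⟩
    obtain ⟨d, hd, hnp, rfl⟩ := exists_unpadded_extension hm hf
    exact ⟨⟨d, hd, hnp⟩, rfl⟩

section Group5

variable {c : Fin (m + 1) → Bool}

theorem lexLt_pad_iff (hm : x + 1 ≤ m) (hc : ∀ i : Fin (m + 1), m - x - 1 ≤ i → c i = true)
    (e : Fin (m - x) → Bool) :
    lexLt (m + 1) (pad m x e) c ↔ lexLt (m - x) e (c ∘ Fin.castLE (by omega)) := by
  cases he : bitAt e (m - x - 1)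
  · have hpad : pad m x e ⟨m - x - 1, by omega⟩ = false := by
      rw [← bitAt_of_lt (pad m x e), pad, bitAt_extendWith _ _ (by omega), if_pos (by omega), he]
    refine iff_of_true (lexLt_of_exists_false hc ⟨_, le_rfl, hpad⟩)
      (lexLt_of_exists_false (k := m - x - 1) (fun i hi => hc _ hi)
        ⟨⟨m - x - 1, by omega⟩, le_rfl, ?_⟩)
    rwa [← bitAt_of_lt e]
  · rw [lexLt_iff_comp_castLE (k := m - x) (by omega) fun i hi => ?_, pad_comp_castLE]
    rw [hc i (by omega), ← bitAt_val (pad m x e), pad, bitAt_extendWith _ _ i.isLt,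
      if_neg (by omega), he, Bool.or_true]

theorem lexLt_of_not_isPadded (hm : x + 1 ≤ m)
    (hc : ∀ i : Fin (m + 1), m - x - 1 ≤ i → c i = true)
    {d : Fin (m + 1) → Bool} (hd : ¬ IsPadded m x d) : lexLt (m + 1) d c := by
  refine lexLt_of_exists_false hc (not_forall_not.1 fun h => hd ?_)
  have hones : ∀ i, m - x - 1 ≤ i → i ≤ m → bitAt d i = true := fun i h₁ h₂ => by
    rw [bitAt_of_lt d (by omega)]
    simpa [h₁] using h ⟨i, by omega⟩
  refine isPadded_of_forall_not_isFlip hm (hones m (by omega) le_rfl) fun p h₁ h₂ hp => hp.2 ?_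
  rw [hones p h₁ (by omega), hones (p + 1) (by omega) (by omega)]

theorem card_isPadded_lexLt (hm : x + 1 ≤ m)
    (hc : ∀ i : Fin (m + 1), m - x - 1 ≤ i → c i = true) :
    Nat.card {d // (noForbidden (m + 1) x d ∧ lexLt (m + 1) d c) ∧ IsPadded m x d} =
      locoIdx (m - x) x (c ∘ Fin.castLE (by omega)) := by
  have hle : m - x ≤ m + 1 := by omega
  refine Nat.card_eq_of_bijective (fun d => ⟨d.1 ∘ Fin.castLE hle,
    noForbidden_comp_castLE _ d.2.1.1, ?_⟩) ⟨?_, ?_⟩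
  · obtain ⟨d, ⟨-, hdc⟩, hpad⟩ := d
    rwa [hpad, lexLt_pad_iff hm hc] at hdc
  · rintro ⟨d₁, _, hpad₁⟩ ⟨d₂, _, hpad₂⟩ hlow
    exact Subtype.ext <| show d₁ = d₂ from
      hpad₁.trans ((congrArg (pad m x) (congrArg Subtype.val hlow)).trans hpad₂.symm)
  · rintro ⟨e, he, hec⟩
    have hpad : lexLt (m + 1) (pad m x e) c := (lexLt_pad_iff hm hc e).2 hec
    exact ⟨⟨pad m x e, ⟨noForbidden_pad he, hpad⟩, isPadded_pad e⟩,
      Subtype.ext (pad_comp_castLE hle e)⟩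

end Group5

end Padding

end Loco

theorem loco_group5_shift (m x : ℕ) (hx : 1 ≤ x) (hm : x + 1 ≤ m)
    (c' : Fin (m + 1) → Bool) (hc' : noForbidden (m + 1) x c')
    (h1 : ∀ k, k ≤ x + 1 → c' ⟨m - k, by omega⟩ = true) :
    noForbidden (m - x) x
      (fun i : Fin (m - x) => c' ⟨(i : ℕ), lt_of_lt_of_le i.isLt (by omega)⟩) ∧
    (locoIdx (m + 1) x c' : ℤ)
      = (locoIdx (m - x) x
          (fun i : Fin (m - x) => c' ⟨(i : ℕ), lt_of_lt_of_le i.isLt (by omega)⟩) : ℤ)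
        + Nex (m : ℤ) x := by
  have hc : ∀ i : Fin (m + 1), m - x - 1 ≤ i → c' i = true := fun i hi => by
    simpa [Fin.ext_iff, Nat.sub_sub_self (Nat.le_of_lt_succ i.isLt)] using h1 (m - i) (by omega)
  refine ⟨Loco.noForbidden_comp_castLE (by omega) hc', ?_⟩
  have hunpadded : Nat.card {d // (noForbidden (m + 1) x d ∧ lexLt (m + 1) d c') ∧
      ¬ Loco.IsPadded m x d} = locoN m x := by
    rw [← Loco.card_noForbidden_not_isPadded hm]
    exact Nat.card_congr <| Equiv.subtypeEquivRight fun d => ⟨fun h => ⟨h.1.1, h.2⟩,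
      fun h => ⟨⟨h.1, Loco.lexLt_of_not_isPadded hm hc h.2⟩, h.2⟩⟩
  rw [locoIdx, Nat.card_subtype_eq_card_and_add_card_and_not _ (Loco.IsPadded m x),
    Loco.card_isPadded_lexLt hm hc, hunpadded, Nex, if_neg (by omega)]
  push_cast
  rfl
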